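/- Let δ > 0 and let E ⊆ ℝ^d be a compact connected set with |E| = m such that for every point of E there is a closed ball of radius δ contained in E within distance 2δ√d of that point (as guaranteed by the internal δ-ball condition). Then diam(E) ≤ √d · 2^{d+2} · (m/ω_d) · δ^{1-d}, where ω_d is the volume of the unit ball. -/
import Mathlib


open MeasureTheory Metric Filter Set

set_option maxHeartbeats 1000000 in
/-- Diameter bound for connected sets satisfying the internal δ-ball condition. -/
theorem diam_le_of_internal_ball_condition {d : ℕ} (hd : 1 ≤ d) (δ : ℝ) (hδ : 0 < δ)
    (E : Set (EuclideanSpace ℝ (Fin d))) (hE : IsCompact E) (hconn : IsConnected E)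
    (hball : ∀ x ∈ E, ∃ y : EuclideanSpace ℝ (Fin d),
      Metric.closedBall y δ ⊆ E ∧ dist x y ≤ 2 * δ * Real.sqrt d) :
    Metric.diam E ≤ Real.sqrt d * 2 ^ (d + 2) *
      ((volume E).toReal / (volume (Metric.ball (0 : EuclideanSpace ℝ (Fin d)) 1)).toReal) *
      δ ^ ((1 : ℝ) - d) := by
  have hdpos : (0:ℝ) < d := by exact_mod_cast Nat.lt_of_lt_of_le Nat.zero_lt_one hd
  have hsd : (1:ℝ) ≤ Real.sqrt d := by
    rw [show (1:ℝ) = Real.sqrt 1 by simp]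
    exact Real.sqrt_le_sqrt (by exact_mod_cast hd)
  set ω : ENNReal := volume (Metric.ball (0 : EuclideanSpace ℝ (Fin d)) 1) with hω
  have hωpos : 0 < ω := measure_ball_pos _ _ one_pos
  have hωfin : ω < ⊤ := measure_ball_lt_top
  have hmfin : volume E < ⊤ := hE.measure_lt_top
  set ωR : ℝ := ω.toReal with hωR
  set mR : ℝ := (volume E).toReal with hmR
  have hωRpos : 0 < ωR := ENNReal.toReal_pos hωpos.ne' hωfin.ne
  have hmRnn : 0 ≤ mR := ENNReal.toReal_nonneg
  set s : ℝ := (4 * Real.sqrt d + 2) * δ with hs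
  have hspos : 0 < s := by positivity
  -- volume of a ball of radius δ
  haveI : Nontrivial (EuclideanSpace ℝ (Fin d)) :=
    Module.nontrivial_of_finrank_pos (R := ℝ) (by rw [finrank_euclideanSpace_fin]; omega)
  have hvol : ∀ c : EuclideanSpace ℝ (Fin d),
      volume (Metric.ball c δ) = ENNReal.ofReal (δ ^ d) * ω := by
    intro c
    rw [Measure.addHaar_ball _ _ hδ.le, finrank_euclideanSpace_fin]
  have hrpow : δ ^ ((1 : ℝ) - d) = δ / δ ^ d := by
    rw [Real.rpow_sub hδ, Real.rpow_one, Real.rpow_natCast]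
  -- main bound on pairwise distances
  have hdd : ∀ a ∈ E, ∀ b ∈ E, dist a b ≤ Real.sqrt d * 2 ^ (d + 2) * (mR / ωR) *
      δ ^ ((1 : ℝ) - d) := by
    intro a ha b hb
    set L : ℝ := dist a b with hL
    have hLnn : 0 ≤ L := dist_nonneg
    set N : ℕ := Nat.floor (L / s) with hN
    have hLlt : L < (N + 1) * s := by
      have := Nat.lt_floor_add_one (L / s)
      calc L = L / s * s := by field_simp
        _ < (N + 1) * s := by
            apply mul_lt_mul_of_pos_right _ hspos
            exact_mod_cast this
    -- intermediate value
    have hIcc : Icc (0:ℝ) L ⊆ (fun z => dist a z) '' E := by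
      have h0 : dist a a = 0 := dist_self a
      have := hconn.isPreconnected.intermediate_value (f := fun z => dist a z) ha hb
        (Continuous.continuousOn (continuous_const.dist continuous_id))
      simpa [h0] using this
    -- choose ball centers
    have key : ∀ k : ℕ, ∃ c : EuclideanSpace ℝ (Fin d), k ≤ N →
        Metric.closedBall c δ ⊆ E ∧ |dist a c - k * s| ≤ 2 * δ * Real.sqrt d := by
      intro k
      by_cases hk : k ≤ N
      · have hks : (k : ℝ) * s ∈ Icc (0:ℝ) L := by
          constructor
          · positivity
          · have hkN : (k : ℝ) ≤ N := by exact_mod_cast hk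
            have hNle : (N : ℝ) * s ≤ L := by
              have : (N : ℝ) ≤ L / s := Nat.floor_le (by positivity)
              calc (N:ℝ) * s ≤ L / s * s := by
                    exact mul_le_mul_of_nonneg_right this hspos.le
                _ = L := by field_simp
            calc (k:ℝ) * s ≤ (N:ℝ) * s := mul_le_mul_of_nonneg_right hkN hspos.le
              _ ≤ L := hNle
        obtain ⟨z, hzE, hz⟩ := hIcc hks
        replace hz : dist a z = k * s := hz
        obtain ⟨c, hcball, hcz⟩ := hball z hzE
        refine ⟨c, fun _ => ⟨hcball, ?_⟩⟩
        have h1 : |dist a c - dist a z| ≤ dist z c := by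
          rw [dist_comm z c]
          calc |dist a c - dist a z| = |dist c a - dist z a| := by
                rw [dist_comm a c, dist_comm a z]
            _ ≤ dist c z := abs_dist_sub_le c z a
        rw [hz] at h1
        exact h1.trans hcz
      · exact ⟨a, fun h => absurd h hk⟩
    choose c hc using key
    -- disjointness
    have hdisj : (↑(Finset.range (N + 1)) : Set ℕ).Pairwise
        (Function.onFun Disjoint fun k => Metric.ball (c k) δ) := by
      intro j hj k hk hjk
      simp only [Finset.coe_range, mem_Iio] at hj hk
      have hjN : j ≤ N := Nat.lt_succ_iff.mp hj
      have hkN : k ≤ N := Nat.lt_succ_iff.mp hk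
      obtain ⟨_, hjd⟩ := hc j hjN
      obtain ⟨_, hkd⟩ := hc k hkN
      have hsep : 2 * δ ≤ dist (c j) (c k) := by
        have habs : |dist a (c j) - dist a (c k)| ≤ dist (c j) (c k) := by
          rw [dist_comm a (c j), dist_comm a (c k)]
          exact abs_dist_sub_le _ _ _
        have h5 := le_abs_self (dist a (c j) - dist a (c k))
        have h6 := neg_abs_le (dist a (c j) - dist a (c k))
        have hjd' := abs_le.mp hjd
        have hkd' := abs_le.mp hkd
        have hseq : s = 4 * (δ * Real.sqrt d) + 2 * δ := by rw [hs]; ring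
        rcases lt_or_gt_of_ne hjk with h | h
        · have hj1 : (j:ℝ) + 1 ≤ (k:ℝ) := by exact_mod_cast h
          have hmul := mul_le_mul_of_nonneg_right hj1 hspos.le
          nlinarith [hjd'.1, hjd'.2, hkd'.1, hkd'.2]
        · have hj1 : (k:ℝ) + 1 ≤ (j:ℝ) := by exact_mod_cast h
          have hmul := mul_le_mul_of_nonneg_right hj1 hspos.le
          nlinarith [hjd'.1, hjd'.2, hkd'.1, hkd'.2]
      exact ball_disjoint_ball (by linarith [hsep])
    -- measure estimate
    have hsub : (⋃ k ∈ Finset.range (N + 1), Metric.ball (c k) δ) ⊆ E := by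
      intro x hx
      simp only [Finset.mem_range, mem_iUnion] at hx
      obtain ⟨k, hk, hxk⟩ := hx
      exact (hc k (Nat.lt_succ_iff.mp hk)).1 (Metric.ball_subset_closedBall.trans
        (subset_refl _) hxk)
    have hμ : ((N : ENNReal) + 1) * (ENNReal.ofReal (δ ^ d) * ω) ≤ volume E := by
      have h1 : volume (⋃ k ∈ Finset.range (N + 1), Metric.ball (c k) δ)
          = ∑ k ∈ Finset.range (N + 1), volume (Metric.ball (c k) δ) :=
        measure_biUnion_finset hdisj fun k _ => measurableSet_ball
      have h2 : ∑ k ∈ Finset.range (N + 1), volume (Metric.ball (c k) δ)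
          = ((N : ENNReal) + 1) * (ENNReal.ofReal (δ ^ d) * ω) := by
        simp only [hvol, Finset.sum_const, Finset.card_range, nsmul_eq_mul]
        push_cast
        ring
      calc ((N : ENNReal) + 1) * (ENNReal.ofReal (δ ^ d) * ω)
          = volume (⋃ k ∈ Finset.range (N + 1), Metric.ball (c k) δ) := by rw [h1, h2]
        _ ≤ volume E := measure_mono hsub
    -- to reals
    have hreal : ((N : ℝ) + 1) * (δ ^ d * ωR) ≤ mR := by
      have := ENNReal.toReal_mono hmfin.ne hμ
      rw [ENNReal.toReal_mul, ENNReal.toReal_mul, ENNReal.toReal_ofReal (by positivity)] at this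
      have hNt : ((N : ENNReal) + 1).toReal = (N:ℝ) + 1 := by
        rw [ENNReal.toReal_add (ENNReal.natCast_ne_top N) ENNReal.one_ne_top,
          ENNReal.toReal_natCast, ENNReal.toReal_one]
      rw [hNt] at this
      exact this
    -- conclude
    have hδd : (0:ℝ) < δ ^ d * ωR := by positivity
    have hN1 : ((N:ℝ) + 1) ≤ mR / (δ ^ d * ωR) := (le_div_iff₀ hδd).mpr hreal
    have hLb : L ≤ mR / (δ ^ d * ωR) * s := by
      calc L ≤ ((N:ℝ) + 1) * s := hLlt.le
        _ ≤ mR / (δ ^ d * ωR) * s := mul_le_mul_of_nonneg_right hN1 hspos.le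
    have heq : mR / (δ ^ d * ωR) * s = (4 * Real.sqrt d + 2) * (mR / ωR) * (δ / δ ^ d) := by
      rw [hs]; field_simp
    rw [heq] at hLb
    rw [hrpow]
    refine hLb.trans ?_
    have h8 : (8:ℝ) ≤ 2 ^ (d + 2) := by
      calc (8:ℝ) = 2 ^ 3 := by norm_num
        _ ≤ 2 ^ (d + 2) := by
          apply pow_le_pow_right₀ one_le_two
          omega
    have hcoef : 4 * Real.sqrt d + 2 ≤ Real.sqrt d * 2 ^ (d + 2) := by
      have h9 : 4 * Real.sqrt d + 2 ≤ 8 * Real.sqrt d := by linarith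
      have h10 : 8 * Real.sqrt d ≤ 2 ^ (d + 2) * Real.sqrt d :=
        mul_le_mul_of_nonneg_right h8 (Real.sqrt_nonneg _)
      calc 4 * Real.sqrt d + 2 ≤ 8 * Real.sqrt d := h9
        _ ≤ 2 ^ (d + 2) * Real.sqrt d := h10
        _ = Real.sqrt d * 2 ^ (d + 2) := mul_comm _ _
    have hnn : 0 ≤ mR / ωR * (δ / δ ^ d) := by positivity
    calc (4 * Real.sqrt d + 2) * (mR / ωR) * (δ / δ ^ d)
        = (4 * Real.sqrt d + 2) * (mR / ωR * (δ / δ ^ d)) := by ring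
      _ ≤ Real.sqrt d * 2 ^ (d + 2) * (mR / ωR * (δ / δ ^ d)) :=
          mul_le_mul_of_nonneg_right hcoef hnn
      _ = Real.sqrt d * 2 ^ (d + 2) * (mR / ωR) * (δ / δ ^ d) := by ring
  have hC : (0:ℝ) ≤ Real.sqrt d * 2 ^ (d + 2) * (mR / ωR) * δ ^ ((1 : ℝ) - d) := by
    rw [hrpow]
    positivity
  exact Metric.diam_le_of_forall_dist_le hC hdd
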